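/- For all n ≥ 1, the dimension of the space P_↗(n) of n-ary operations of the operad P_↗ equals r_n, the number of planar rooted forests with n vertices. -/

import Mathlib

/-- Planar rooted trees. -/
inductive PTree : Type
  | node : List PTree → PTree

abbrev Forest : Type := List PTree

mutual
def PTree.weight : PTree → ℕ
  | .node c => 1 + Forest.weight c
def Forest.weight : Forest → ℕ
  | [] => 0
  | t :: r => PTree.weight t + Forest.weight r
end

/-- Formal expressions in two binary operations `m` and `↗` (here `g`): these are the
planar binary trees with internal vertices decorated by the two generating operations
of the free non-symmetric operad on `m` and `↗`. -/
inductive Expr : Type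
  | leaf : Expr
  | m : Expr → Expr → Expr
  | g : Expr → Expr → Expr

/-- The arity (number of leaves) of an expression. -/
def Expr.arity : Expr → ℕ
  | .leaf => 1
  | .m a b => a.arity + b.arity
  | .g a b => a.arity + b.arity

/-- The congruence generated by the defining relations of the operad `P_↗`:
`m∘(↗,I) = ↗∘(I,m)`, `m∘(m,I) = m∘(I,m)`, `↗∘(↗,I) = ↗∘(I,↗)`,
together with compatibility with the operadic (tree) compositions. -/
inductive RelNE : Expr → Expr → Prop
  | rel1 (a b c : Expr) : RelNE (.m (.g a b) c) (.g a (.m b c))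
  | rel2 (a b c : Expr) : RelNE (.m (.m a b) c) (.m a (.m b c))
  | rel3 (a b c : Expr) : RelNE (.g (.g a b) c) (.g a (.g b c))
  | m_left {a a' : Expr} (b : Expr) : RelNE a a' → RelNE (.m a b) (.m a' b)
  | m_right (a : Expr) {b b' : Expr} : RelNE b b' → RelNE (.m a b) (.m a b')
  | g_left {a a' : Expr} (b : Expr) : RelNE a a' → RelNE (.g a b) (.g a' b)
  | g_right (a : Expr) {b b' : Expr} : RelNE b b' → RelNE (.g a b) (.g a b')

/-!
Evaluating an expression at `(•, …, •)` in the forest algebra sends `m` to concatenation and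
`↗` to grafting onto the leftmost leaf. Both operations are associative and satisfy
`(F ↗ G) H = F ↗ (G H)`, so evaluation is constant on equivalence classes. Conversely, every
expression is equivalent to the normal form of its value, where the forest `t₁ ⋯ tₖ` is written
`m(t₁, m(t₂, ⋯))` and the tree with children `c ≠ []` is written `↗(c, •)`: the three relations
are exactly what is needed to rewrite a product or a grafting of normal forms into a normal form.
Evaluation is thus a bijection from classes of `n`-ary expressions onto forests of weight `n`.
-/

open Relation

local infix:50 " ∼ " => EqvGen RelNE

theorem Relation.EqvGen.map {α β : Type*} {r : α → α → Prop} {s : β → β → Prop} (f : α → β)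
    (hf : ∀ a b, r a b → s (f a) (f b)) {a b : α} (h : EqvGen r a b) :
    EqvGen s (f a) (f b) := by
  induction h with
  | rel a b hab => exact .rel _ _ (hf a b hab)
  | refl => exact .refl _
  | symm _ _ _ ih => exact ih.symm
  | trans _ _ _ _ _ ih₁ ih₂ => exact ih₁.trans _ _ _ ih₂

namespace Expr

theorem eqvGen_m {a a' b b' : Expr} (ha : a ∼ a') (hb : b ∼ b') : .m a b ∼ .m a' b' :=
  (ha.map (m · b) fun _ _ => RelNE.m_left b).trans _ _ _
    (hb.map (m a') fun _ _ => RelNE.m_right a')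

theorem eqvGen_g {a a' b b' : Expr} (ha : a ∼ a') (hb : b ∼ b') : .g a b ∼ .g a' b' :=
  (ha.map (g · b) fun _ _ => RelNE.g_left b).trans _ _ _
    (hb.map (g a') fun _ _ => RelNE.g_right a')

end Expr

@[simp]
theorem PTree.weight_node (c : Forest) : (PTree.node c).weight = 1 + c.weight := by
  simp [PTree.weight]

namespace Forest

@[simp]
theorem weight_nil : Forest.weight [] = 0 := by
  simp [Forest.weight]

@[simp]
theorem weight_cons (t : PTree) (F : Forest) : Forest.weight (t :: F) = t.weight + F.weight := by
  simp [Forest.weight]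

@[simp]
theorem weight_append (F G : Forest) : (F ++ G).weight = F.weight + G.weight := by
  induction F with
  | nil => simp
  | cons t F ih => simp [ih, Nat.add_assoc]

theorem ne_nil_of_weight_pos {F : Forest} (h : 0 < F.weight) : F ≠ [] := by
  rintro rfl
  simp at h

/-- `F.graftLeft G` is `F ↗ G`: the forest `F` grafted onto the leftmost leaf of `G`. -/
def graftLeft (F : Forest) : Forest → Forest
  | [] => F
  | .node d :: r => .node (F.graftLeft d) :: r

@[simp]
theorem graftLeft_nil (F : Forest) : F.graftLeft [] = F := by
  simp [graftLeft]

@[simp]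
theorem graftLeft_node_cons (F d r : Forest) :
    F.graftLeft (.node d :: r) = .node (F.graftLeft d) :: r := by
  simp [graftLeft]

theorem graftLeft_ne_nil (F : Forest) {G : Forest} (hG : G ≠ []) : F.graftLeft G ≠ [] := by
  obtain ⟨⟨d⟩, r, rfl⟩ := List.exists_cons_of_ne_nil hG
  simp

theorem graftLeft_append (F : Forest) {G : Forest} (hG : G ≠ []) (H : Forest) :
    F.graftLeft G ++ H = F.graftLeft (G ++ H) := by
  obtain ⟨⟨d⟩, r, rfl⟩ := List.exists_cons_of_ne_nil hG
  simp

theorem graftLeft_assoc (A B C : Forest) :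
    (A.graftLeft B).graftLeft C = A.graftLeft (B.graftLeft C) :=
  match C with
  | [] => by simp
  | .node d :: r => by simp [graftLeft_assoc A B d]

theorem weight_graftLeft (F : Forest) {G : Forest} (hG : G ≠ []) :
    (F.graftLeft G).weight = F.weight + G.weight :=
  match G, hG with
  | .node [] :: r, _ => by
    simp only [graftLeft_node_cons, graftLeft_nil, weight_cons, PTree.weight_node, weight_nil]
    omega
  | .node (t :: d) :: r, _ => by
    simp only [graftLeft_node_cons, weight_cons, PTree.weight_node,
      weight_graftLeft F (List.cons_ne_nil t d)]
    omega

end Forest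

namespace Expr

def eval : Expr → Forest
  | leaf => [.node []]
  | m a b => a.eval ++ b.eval
  | g a b => a.eval.graftLeft b.eval

theorem eval_ne_nil (e : Expr) : e.eval ≠ [] := by
  induction e with
  | leaf => simp [eval]
  | m a b iha _ => simp [eval, iha]
  | g a b _ ihb => exact Forest.graftLeft_ne_nil _ ihb

theorem weight_eval (e : Expr) : e.eval.weight = e.arity := by
  induction e with
  | leaf => simp [eval, arity]
  | m a b iha ihb => simp [eval, arity, iha, ihb]
  | g a b iha ihb => simp [eval, arity, Forest.weight_graftLeft _ b.eval_ne_nil, iha, ihb]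

theorem eval_eq_of_rel {a b : Expr} (h : RelNE a b) : a.eval = b.eval := by
  induction h with
  | rel1 a b c => exact Forest.graftLeft_append _ b.eval_ne_nil _
  | rel2 a b c => exact List.append_assoc _ _ _
  | rel3 a b c => exact Forest.graftLeft_assoc _ _ _
  | m_left | m_right | g_left | g_right => simp only [eval, *]

theorem eval_eq_of_eqvGen {a b : Expr} (h : a ∼ b) : a.eval = b.eval :=
  congrArg (Quot.lift eval fun _ _ => eval_eq_of_rel) (Quot.eqvGen_sound h)

end Expr

mutual
def PTree.toExpr : PTree → Expr
  | .node [] => .leaf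
  | .node (t :: c) => .g (Forest.toExpr (t :: c)) .leaf
def Forest.toExpr : Forest → Expr
  | [] => .leaf -- junk value
  | [t] => t.toExpr
  | t :: r :: s => .m t.toExpr (Forest.toExpr (r :: s))
end

@[simp]
theorem PTree.toExpr_node_nil : (PTree.node []).toExpr = .leaf := by
  simp [PTree.toExpr]

theorem PTree.toExpr_node {c : Forest} (hc : c ≠ []) :
    (PTree.node c).toExpr = .g c.toExpr .leaf := by
  obtain ⟨t, c, rfl⟩ := List.exists_cons_of_ne_nil hc
  simp [PTree.toExpr]

@[simp]
theorem Forest.toExpr_singleton (t : PTree) : Forest.toExpr [t] = t.toExpr := by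
  simp [Forest.toExpr]

@[simp]
theorem Forest.toExpr_cons_cons (t r : PTree) (s : Forest) :
    Forest.toExpr (t :: r :: s) = .m t.toExpr (Forest.toExpr (r :: s)) := by
  simp [Forest.toExpr]

mutual
theorem PTree.eval_toExpr : (t : PTree) → t.toExpr.eval = [t]
  | .node [] => rfl
  | .node (u :: c) => by
    simp [PTree.toExpr_node, Expr.eval, Forest.eval_toExpr (List.cons_ne_nil u c)]
theorem Forest.eval_toExpr : {F : Forest} → F ≠ [] → F.toExpr.eval = F
  | [t], _ => by simp [PTree.eval_toExpr]
  | t :: r :: s, _ => by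
    simp [Expr.eval, PTree.eval_toExpr, Forest.eval_toExpr (List.cons_ne_nil r s)]
end

theorem Forest.arity_toExpr {F : Forest} (hF : F ≠ []) : F.toExpr.arity = F.weight := by
  rw [← Expr.weight_eval, Forest.eval_toExpr hF]

theorem Forest.toExpr_append_eqvGen {F G : Forest} (hF : F ≠ []) (hG : G ≠ []) :
    (F ++ G).toExpr ∼ .m F.toExpr G.toExpr :=
  match F, hF with
  | [t], _ => by
    obtain ⟨u, s, rfl⟩ := List.exists_cons_of_ne_nil hG
    exact .refl _
  | t :: r :: s, _ => by
    obtain ⟨u, s', rfl⟩ := List.exists_cons_of_ne_nil hG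
    have ih := Forest.toExpr_append_eqvGen (List.cons_ne_nil r s) hG
    simp only [List.cons_append, Forest.toExpr_cons_cons] at ih ⊢
    exact (Expr.eqvGen_m (.refl _) ih).trans _ _ _ (EqvGen.rel _ _ (.rel2 _ _ _)).symm

mutual
theorem PTree.toExpr_graftLeft_eqvGen {F : Forest} (hF : F ≠ []) :
    (t : PTree) → (F.graftLeft [t]).toExpr ∼ .g F.toExpr t.toExpr
  | .node [] => by simpa [PTree.toExpr_node hF] using EqvGen.refl _
  | .node (v :: d) => by
    have hd := List.cons_ne_nil v d
    have ih := Forest.toExpr_graftLeft_eqvGen hF hd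
    simp only [Forest.graftLeft_node_cons, Forest.toExpr_singleton, PTree.toExpr_node hd,
      PTree.toExpr_node (Forest.graftLeft_ne_nil F hd)]
    exact (Expr.eqvGen_g ih (.refl _)).trans _ _ _ (EqvGen.rel _ _ (.rel3 _ _ _))
theorem Forest.toExpr_graftLeft_eqvGen {F : Forest} (hF : F ≠ []) :
    {G : Forest} → G ≠ [] → (F.graftLeft G).toExpr ∼ .g F.toExpr G.toExpr
  | [t], _ => by simpa using PTree.toExpr_graftLeft_eqvGen hF t
  | .node d :: r :: s, _ => by
    have ih := PTree.toExpr_graftLeft_eqvGen hF (.node d)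
    simp only [Forest.graftLeft_node_cons, Forest.toExpr_singleton] at ih
    simp only [Forest.graftLeft_node_cons, Forest.toExpr_cons_cons]
    exact (Expr.eqvGen_m ih (.refl _)).trans _ _ _ (EqvGen.rel _ _ (.rel1 _ _ _))
end

theorem Expr.toExpr_eval_eqvGen (e : Expr) : e.eval.toExpr ∼ e := by
  induction e with
  | leaf => exact .refl _
  | m a b iha ihb =>
    exact (Forest.toExpr_append_eqvGen a.eval_ne_nil b.eval_ne_nil).trans _ _ _
      (Expr.eqvGen_m iha ihb)
  | g a b iha ihb =>
    exact (Forest.toExpr_graftLeft_eqvGen a.eval_ne_nil b.eval_ne_nil).trans _ _ _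
      (Expr.eqvGen_g iha ihb)

def Expr.evalEquiv (n : ℕ) (hn : 1 ≤ n) :
    Quot (fun a b : {e : Expr // e.arity = n} => a.1 ∼ b.1) ≃ {F : Forest // F.weight = n} :=
  have ne_nil (F : {F : Forest // F.weight = n}) : F.1 ≠ [] :=
    F.1.ne_nil_of_weight_pos (hn.trans_eq F.2.symm)
  { toFun := Quot.lift (fun e => ⟨e.1.eval, e.1.weight_eval.trans e.2⟩)
      fun _ _ h => Subtype.ext (Expr.eval_eq_of_eqvGen h)
    invFun F := Quot.mk _ ⟨F.1.toExpr, (Forest.arity_toExpr (ne_nil F)).trans F.2⟩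
    left_inv := Quot.ind fun e => Quot.sound (Expr.toExpr_eval_eqvGen e.1)
    right_inv F := Subtype.ext (Forest.eval_toExpr (ne_nil F)) }

/-- `P_↗(n)` has the equivalence classes of `n`-ary expressions as a basis, so its
dimension is the number of such classes. -/
theorem dim_P_graftLeaf (n : ℕ) (hn : 1 ≤ n) :
    Nat.card (Quot (fun a b : {e : Expr // e.arity = n} => Relation.EqvGen RelNE a.1 b.1)) =
      Nat.card {F : Forest // Forest.weight F = n} :=
  Nat.card_congr (Expr.evalEquiv n hn)
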